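/- Let L be the free Lie algebra over Z/2 on two generators μ_1, μ_2, graded with deg μ_i = 1. Then its third graded component L³ is a 2-dimensional Z/2-vector space with basis [[μ_1, μ_2], μ_1] and [[μ_1, μ_2], μ_2], whereas for G = Z/2 * Z/2 the quotient γ_3(G)/γ_4(G) ≅ Z/2; in particular the canonical epimorphism L → L(G) sending μ_i to ḡ_i is not injective, identifying [[μ_1, μ_2], μ_1] with [[μ_1, μ_2], μ_2]. -/

import Mathlib

/-- The group commutator with the convention `(a, b) = a⁻¹ b⁻¹ a b`. -/
def gcomm {G : Type*} [Group G] (a b : G) : G := a⁻¹ * b⁻¹ * a * b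

/-- The free product `ℤ/2 * ℤ/2`, presented with two generators of order 2. -/
abbrev Z2Z2 := PresentedGroup {w : FreeGroup (Fin 2) | ∃ i, w = FreeGroup.of i ^ 2}

/-- The generators `μ₁, μ₂` of the free Lie algebra over `ℤ/2` on two generators. -/
noncomputable def μ (i : Fin 2) : FreeLieAlgebra (ZMod 2) (Fin 2) :=
  FreeLieAlgebra.of (ZMod 2) i

/-- The third graded component of the free Lie algebra over `ℤ/2` on `μ₁, μ₂`
(with `deg μᵢ = 1`): the span of the left-nested brackets of length 3 in the generators. -/
noncomputable def L3 : Submodule (ZMod 2) (FreeLieAlgebra (ZMod 2) (Fin 2)) :=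
  Submodule.span (ZMod 2) {x | ∃ i j k : Fin 2, x = ⁅⁅μ i, μ j⁆, μ k⁆}

/-!
The free Lie algebra maps to the free associative algebra `R[FreeMonoid X]`, where
`[[μ₁,μ₂],μ₁]` and `[[μ₁,μ₂],μ₂]` are told apart by their coefficients on the words `μ₁μ₁μ₂`
and `μ₂μ₂μ₁`; antisymmetry reduces every other left-nested triple bracket to `±` one of them.

`ℤ/2 * ℤ/2` is the infinite dihedral group, `g₁g₂` going to the rotation `r 1`. There
`⁅r i, g⁆ ∈ ⟨r (2i)⟩` and `⁅r i, s⁆ = r (2i)` for a reflection `s`, so `γₙ = ⟨r (2ⁿ⁻¹)⟩` for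
`n ≥ 2` (in Mathlib's indexing `lowerCentralSeries ⊤ n` is `γₙ₊₁`), and since `r 1` has infinite
order each `γₙ/γₙ₊₁` is `ℤ/2`. Finally `(g₁,g₂,g₁) = (g₁,g₂,g₂)` holds for any two involutions.
-/

open Subgroup DihedralGroup
open scoped commutatorElement

theorem gcomm_gcomm_eq_of_mul_self_eq_one {G : Type*} [Group G] {a b : G}
    (ha : a * a = 1) (hb : b * b = 1) : gcomm (gcomm a b) a = gcomm (gcomm a b) b := by
  have ha' : a⁻¹ = a := inv_eq_of_mul_eq_one_right ha
  have hb' : b⁻¹ = b := inv_eq_of_mul_eq_one_right hb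
  have haa (x : G) : a * (a * x) = x := by rw [← mul_assoc, ha, one_mul]
  simp only [gcomm, mul_inv_rev, ha', hb', mul_assoc, haa, hb, mul_one]

theorem Subgroup.map_lowerCentralSeries_top_of_surjective {G H : Type*} [Group G] [Group H]
    {f : G →* H} (hf : Function.Surjective f) (n : ℕ) :
    ((⊤ : Subgroup G).lowerCentralSeries n).map f = (⊤ : Subgroup H).lowerCentralSeries n := by
  rw [map_lowerCentralSeries, map_top_of_surjective f hf]

noncomputable def zpowersQuotientZPowersPowEquivZMod {G : Type*} [Group G] {x : G}
    (hx : ¬IsOfFinOrder x) (n : ℕ) :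
    zpowers x ⧸ (zpowers (x ^ n)).subgroupOf (zpowers x) ≃* Multiplicative (ZMod n) := by
  have hinj : Function.Injective (x ^ · : ℤ → G) := injective_zpow_iff_not_isOfFinOrder.2 hx
  let e : Multiplicative ℤ ≃* zpowers x := MonoidHom.ofInjective (f := zpowersHom G x) hinj
  let f : zpowers x →* Multiplicative (ZMod n) :=
    (Int.castAddHom (ZMod n)).toMultiplicative.comp e.symm.toMonoidHom
  have hf : Function.Surjective f := ZMod.intCast_surjective.comp e.symm.surjective
  have hker : f.ker = (zpowers (x ^ n)).subgroupOf (zpowers x) := by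
    ext y
    obtain ⟨m, rfl⟩ : ∃ m : ℤ, e (.ofAdd m) = y := ⟨(e.symm y).toAdd, e.apply_symm_apply y⟩
    have hfe : f (e (.ofAdd m)) = .ofAdd (m : ZMod n) := by simp [f]
    have hpow (k : ℤ) : (x ^ n) ^ k = e (.ofAdd m) ↔ n * k = m := by
      rw [← zpow_natCast, ← zpow_mul]
      exact hinj.eq_iff
    rw [MonoidHom.mem_ker, mem_subgroupOf, mem_zpowers_iff, hfe, ofAdd_eq_one,
      ZMod.intCast_zmod_eq_zero_iff_dvd]
    simp only [hpow, dvd_def, eq_comm]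
  exact (QuotientGroup.quotientMulEquivOfEq hker.symm).trans
    (QuotientGroup.quotientKerEquivOfSurjective f hf)

namespace DihedralGroup

variable {n : ℕ}

theorem r_mul_mem_zpowers_r (i j : ZMod n) : r (i * j) ∈ zpowers (r i) := by
  obtain ⟨k, rfl⟩ := ZMod.intCast_surjective j
  rw [← r_zpow]
  exact zpow_mem_zpowers _ _

theorem commutatorElement_r_mem_zpowers (i : ZMod n) (g : DihedralGroup n) :
    ⁅r i, g⁆ ∈ zpowers (r (2 * i)) := by
  cases g with
  | r j => simp [commutatorElement_def, add_comm i j]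
  | sr j =>
    convert mem_zpowers (r (2 * i)) using 1
    simp [commutatorElement_def]
    ring

theorem commutatorElement_mem_zpowers_r_two (g h : DihedralGroup n) : ⁅g, h⁆ ∈ zpowers (r 2) := by
  have hle (i : ZMod n) : zpowers (r (2 * i)) ≤ zpowers (r 2) :=
    zpowers_le.2 (r_mul_mem_zpowers_r 2 i)
  cases g with
  | r i => exact hle i (commutatorElement_r_mem_zpowers i h)
  | sr i =>
    cases h with
    | r j =>
      rw [← commutatorElement_inv]
      exact inv_mem (hle j (commutatorElement_r_mem_zpowers j _))
    | sr j =>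
      rw [show ⁅sr i, sr j⁆ = r (2 * (j - i)) by simp [commutatorElement_def]; ring]
      exact r_mul_mem_zpowers_r _ _

theorem commutator_eq_zpowers_r_two : commutator (DihedralGroup n) = zpowers (r 2) := by
  apply le_antisymm
  · rw [commutator_def, commutator_le]
    exact fun g _ h _ => commutatorElement_mem_zpowers_r_two g h
  · rw [zpowers_le, show r (2 : ZMod n) = ⁅r (1 : ZMod n), sr 0⁆ by
      simp [commutatorElement_def]; ring]
    exact commutator_mem_commutator (mem_top _) (mem_top _)

theorem commutator_zpowers_r_top (i : ZMod n) :
    ⁅zpowers (r i), (⊤ : Subgroup (DihedralGroup n))⁆ = zpowers (r (2 * i)) := by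
  apply le_antisymm
  · rw [commutator_le]
    rintro _ ⟨k, rfl⟩ g -
    dsimp only
    rw [r_zpow]
    refine zpowers_le.2 ?_ (commutatorElement_r_mem_zpowers _ g)
    rw [← mul_assoc]
    exact r_mul_mem_zpowers_r _ _
  · rw [zpowers_le, show r (2 * i) = ⁅r i, sr 0⁆ by simp [commutatorElement_def]; ring]
    exact commutator_mem_commutator (mem_zpowers _) (mem_top _)

theorem lowerCentralSeries_succ_eq_zpowers (k : ℕ) :
    (⊤ : Subgroup (DihedralGroup n)).lowerCentralSeries (k + 1) = zpowers (r (2 ^ (k + 1))) := by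
  induction k with
  | zero => rw [zero_add, pow_one, top_lowerCentralSeries_one, commutator_eq_zpowers_r_two]
  | succ k ih =>
    rw [Subgroup.lowerCentralSeries_succ, ih, commutator_zpowers_r_top, pow_succ' 2 (k + 1)]

theorem not_isOfFinOrder_r {i : ZMod 0} (hi : i ≠ 0) : ¬IsOfFinOrder (r i) := by
  rw [isOfFinOrder_iff_pow_eq_one]
  rintro ⟨m, hm, h⟩
  rw [r_pow, one_def, r.injEq, mul_eq_zero, Nat.cast_eq_zero] at h
  exact h.elim hi hm.ne'

end DihedralGroup

namespace Z2Z2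

theorem of_mul_self (i : Fin 2) : (PresentedGroup.of i : Z2Z2) * PresentedGroup.of i = 1 := by
  rw [← pow_two, PresentedGroup.of, ← map_pow]
  exact PresentedGroup.one_of_mem ⟨i, rfl⟩

local notation "a" => (PresentedGroup.of 0 : Z2Z2)
local notation "b" => (PresentedGroup.of 1 : Z2Z2)

theorem of_zero_mul_zpow_mul_of_zero (k : ℤ) : a * (a * b) ^ k * a = (a * b) ^ (-k) := by
  have ha : a⁻¹ = a := inv_eq_of_mul_eq_one_right (of_mul_self 0)
  have hb : b⁻¹ = b := inv_eq_of_mul_eq_one_right (of_mul_self 1)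
  calc a * (a * b) ^ k * a = (a * (a * b) * a⁻¹) ^ k := by rw [conj_zpow, ha]
    _ = (a * b) ^ (-k) := by
      rw [ha, ← mul_assoc, of_mul_self, one_mul, ← inv_zpow', mul_inv_rev, ha, hb]

theorem zpow_mul_of_zero_mul_zpow (i j : ℤ) :
    (a * b) ^ i * (a * (a * b) ^ j) = a * (a * b) ^ (j - i) := by
  calc (a * b) ^ i * (a * (a * b) ^ j) = a * a * ((a * b) ^ i * (a * (a * b) ^ j)) := by
        rw [of_mul_self, one_mul]
    _ = a * (a * (a * b) ^ i * a) * (a * b) ^ j := by simp only [mul_assoc]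
    _ = a * (a * b) ^ (j - i) := by
      rw [of_zero_mul_zpow_mul_of_zero, mul_assoc, ← zpow_add, neg_add_eq_sub]

theorem of_zero_mul_zpow_mul_of_zero_mul_zpow (i j : ℤ) :
    a * (a * b) ^ i * (a * (a * b) ^ j) = (a * b) ^ (j - i) := by
  rw [← mul_assoc, of_zero_mul_zpow_mul_of_zero, ← zpow_add, neg_add_eq_sub]

noncomputable def toDihedralGroup : Z2Z2 →* DihedralGroup 0 :=
  PresentedGroup.toGroup (f := fun i : Fin 2 => sr (i : ZMod 0)) <| by
    rintro _ ⟨i, rfl⟩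
    rw [map_pow, FreeGroup.lift_apply_of, sq, sr_mul_self]

-- `ZMod 0` is `ℤ` only up to unfolding, so exponents are passed through a function on `ℤ`.
noncomputable def ofDihedralGroup : DihedralGroup 0 →* Z2Z2 where
  toFun
    | r k => ((a * b) ^ · : ℤ → Z2Z2) k
    | sr k => a * ((a * b) ^ · : ℤ → Z2Z2) k
  map_one' := zpow_zero _
  map_mul' := by
    rintro (i | i) (j | j) <;> dsimp only [r_mul_r, r_mul_sr, sr_mul_r, sr_mul_sr]
    · exact zpow_add _ i j
    · exact (zpow_mul_of_zero_mul_zpow i j).symm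
    · exact (congrArg (a * ·) (zpow_add _ i j)).trans (mul_assoc _ _ _).symm
    · exact (of_zero_mul_zpow_mul_of_zero_mul_zpow i j).symm

theorem toDihedralGroup_of_zero : toDihedralGroup a = sr 0 := PresentedGroup.toGroup.of _

theorem toDihedralGroup_of_one : toDihedralGroup b = sr 1 := PresentedGroup.toGroup.of _

theorem toDihedralGroup_zpow (k : ℤ) : toDihedralGroup ((a * b) ^ k) = r k := by
  rw [map_zpow, map_mul, toDihedralGroup_of_zero, toDihedralGroup_of_one, sr_mul_sr, sub_zero,
    r_one_zpow]
  rfl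

theorem ofDihedralGroup_r (k : ℤ) : ofDihedralGroup (r k) = (a * b) ^ k := rfl

theorem ofDihedralGroup_sr (k : ℤ) : ofDihedralGroup (sr k) = a * (a * b) ^ k := rfl

theorem ofDihedralGroup_comp_toDihedralGroup :
    ofDihedralGroup.comp toDihedralGroup = MonoidHom.id Z2Z2 :=
  PresentedGroup.ext <| Fin.forall_fin_two.2
    ⟨(congrArg ofDihedralGroup toDihedralGroup_of_zero).trans <| (ofDihedralGroup_sr 0).trans <| by
        rw [zpow_zero, mul_one]; rfl,
     (congrArg ofDihedralGroup toDihedralGroup_of_one).trans <| (ofDihedralGroup_sr 1).trans <| by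
        rw [zpow_one, ← mul_assoc, of_mul_self, one_mul]; rfl⟩

theorem toDihedralGroup_ofDihedralGroup (g : DihedralGroup 0) :
    toDihedralGroup (ofDihedralGroup g) = g := by
  obtain ⟨k, rfl | rfl⟩ : ∃ k : ℤ, g = r k ∨ g = sr k := by
    cases g with
    | r k => exact ⟨k, .inl rfl⟩
    | sr k => exact ⟨k, .inr rfl⟩
  · rw [ofDihedralGroup_r, toDihedralGroup_zpow]
  · rw [ofDihedralGroup_sr, map_mul, toDihedralGroup_zpow, toDihedralGroup_of_zero]
    exact (sr_mul_r 0 k).trans (congrArg (sr (n := 0)) (zero_add k))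

noncomputable def mulEquivDihedralGroup : Z2Z2 ≃* DihedralGroup 0 :=
  MonoidHom.toMulEquiv toDihedralGroup ofDihedralGroup ofDihedralGroup_comp_toDihedralGroup
    (MonoidHom.ext toDihedralGroup_ofDihedralGroup)

theorem lowerCentralSeries_succ_eq_zpowers (k : ℕ) :
    (⊤ : Subgroup Z2Z2).lowerCentralSeries (k + 1) =
      zpowers (mulEquivDihedralGroup.symm (r (2 ^ (k + 1)))) := by
  rw [← map_lowerCentralSeries_top_of_surjective (f := mulEquivDihedralGroup.symm.toMonoidHom)
    mulEquivDihedralGroup.symm.surjective, DihedralGroup.lowerCentralSeries_succ_eq_zpowers,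
    MonoidHom.map_zpowers]
  rfl

noncomputable def lowerCentralSeriesQuotientEquiv (k : ℕ) :
    (⊤ : Subgroup Z2Z2).lowerCentralSeries (k + 1) ⧸
        ((⊤ : Subgroup Z2Z2).lowerCentralSeries (k + 2)).subgroupOf
          ((⊤ : Subgroup Z2Z2).lowerCentralSeries (k + 1)) ≃*
      Multiplicative (ZMod 2) :=
  have hy : ¬IsOfFinOrder (mulEquivDihedralGroup.symm (r (2 ^ (k + 1)))) := fun h =>
    not_isOfFinOrder_r (pow_ne_zero _ two_ne_zero) <| by
      simpa using mulEquivDihedralGroup.toMonoidHom.isOfFinOrder h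
  have hsucc : (⊤ : Subgroup Z2Z2).lowerCentralSeries (k + 2) =
      zpowers (mulEquivDihedralGroup.symm (r (2 ^ (k + 1))) ^ 2) := by
    rw [lowerCentralSeries_succ_eq_zpowers, ← map_pow, r_pow, Nat.cast_ofNat, ← pow_succ]
  (QuotientGroup.equivQuotientSubgroupOfOfEq hsucc (lowerCentralSeries_succ_eq_zpowers k)).trans
    (zpowersQuotientZPowersPowEquivZMod hy 2)

end Z2Z2

namespace FreeLieAlgebra

attribute [local instance] LieRing.ofAssociativeRing

variable (R X : Type*) [CommRing R]

noncomputable def toMonoidAlgebra : FreeLieAlgebra R X →ₗ⁅R⁆ MonoidAlgebra R (FreeMonoid X) :=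
  lift R fun x => MonoidAlgebra.single (FreeMonoid.of x) 1

variable {R X}

theorem toMonoidAlgebra_lie_lie (i j k : X) :
    toMonoidAlgebra R X ⁅⁅of R i, of R j⁆, of R k⁆ =
      MonoidAlgebra.single (FreeMonoid.ofList [i, j, k]) 1
        - MonoidAlgebra.single (FreeMonoid.ofList [j, i, k]) 1
        - (MonoidAlgebra.single (FreeMonoid.ofList [k, i, j]) 1
          - MonoidAlgebra.single (FreeMonoid.ofList [k, j, i]) 1) := by
  simp only [toMonoidAlgebra, LieHom.map_lie, lift_of_apply, Ring.lie_def, sub_mul, mul_sub,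
    MonoidAlgebra.single_mul_single, mul_one]
  rfl

theorem coeff_toMonoidAlgebra_lie_lie [DecidableEq X] (i j k : X) (w : List X) :
    (toMonoidAlgebra R X ⁅⁅of R i, of R j⁆, of R k⁆).coeff (FreeMonoid.ofList w) =
      (if [i, j, k] = w then 1 else 0) - (if [j, i, k] = w then 1 else 0)
        - ((if [k, i, j] = w then 1 else 0) - (if [k, j, i] = w then 1 else 0)) := by
  classical
  simp only [toMonoidAlgebra_lie_lie, MonoidAlgebra.coeff_sub, Finsupp.sub_apply,
    MonoidAlgebra.coeff_single, Finsupp.single_apply, EmbeddingLike.apply_eq_iff_eq]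

theorem linearIndependent_lie_lie {i j : X} (hij : i ≠ j) :
    LinearIndependent R ![⁅⁅of R i, of R j⁆, of R i⁆, ⁅⁅of R i, of R j⁆, of R j⁆] := by
  classical
  rw [LinearIndependent.pair_iff]
  intro s t hst
  have hcoeff (w : List X) :
      s * (toMonoidAlgebra R X ⁅⁅of R i, of R j⁆, of R i⁆).coeff (.ofList w) +
        t * (toMonoidAlgebra R X ⁅⁅of R i, of R j⁆, of R j⁆).coeff (.ofList w) = 0 := by
    simpa only [map_add, map_smul, MonoidAlgebra.coeff_add, MonoidAlgebra.coeff_smul,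
      Finsupp.add_apply, Finsupp.smul_apply, smul_eq_mul, map_zero, MonoidAlgebra.coeff_zero,
      Finsupp.coe_zero, Pi.zero_apply]
      using congrArg (fun z => (toMonoidAlgebra R X z).coeff (.ofList w)) hst
  simp only [coeff_toMonoidAlgebra_lie_lie] at hcoeff
  exact ⟨by simpa [hij, hij.symm] using hcoeff [i, i, j],
    by simpa [hij, hij.symm] using hcoeff [j, j, i]⟩

end FreeLieAlgebra

theorem span_lie_lie_eq_span_pair {R L : Type*} [Ring R] [LieRing L] [Module R L] (x : Fin 2 → L) :
    Submodule.span R {y | ∃ i j k : Fin 2, y = ⁅⁅x i, x j⁆, x k⁆} =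
      Submodule.span R (Set.range ![⁅⁅x 0, x 1⁆, x 0⁆, ⁅⁅x 0, x 1⁆, x 1⁆]) := by
  have hmem (k : Fin 2) :
      ⁅⁅x 0, x 1⁆, x k⁆ ∈ Submodule.span R (Set.range ![⁅⁅x 0, x 1⁆, x 0⁆, ⁅⁅x 0, x 1⁆, x 1⁆]) :=
    Submodule.subset_span ⟨k, by fin_cases k <;> rfl⟩
  apply le_antisymm
  · rw [Submodule.span_le]
    rintro _ ⟨i, j, k, rfl⟩
    match i, j with
    | 0, 0 | 1, 1 =>
      rw [lie_self, zero_lie]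
      exact zero_mem _
    | 0, 1 => exact hmem k
    | 1, 0 =>
      rw [← lie_skew (x 1) (x 0), neg_lie]
      exact neg_mem (hmem k)
  · refine Submodule.span_mono ?_
    rintro _ ⟨m, rfl⟩
    fin_cases m
    exacts [⟨0, 1, 0, rfl⟩, ⟨0, 1, 1, rfl⟩]

theorem linearIndependent_L3 :
    LinearIndependent (ZMod 2) ![⁅⁅μ 0, μ 1⁆, μ 0⁆, ⁅⁅μ 0, μ 1⁆, μ 1⁆] :=
  FreeLieAlgebra.linearIndependent_lie_lie zero_ne_one

theorem L3_eq_span :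
    L3 = Submodule.span (ZMod 2) (Set.range ![⁅⁅μ 0, μ 1⁆, μ 0⁆, ⁅⁅μ 0, μ 1⁆, μ 1⁆]) :=
  span_lie_lie_eq_span_pair μ

noncomputable def L3.basis : Module.Basis (Fin 2) (ZMod 2) L3 :=
  (Module.Basis.span linearIndependent_L3).map (LinearEquiv.ofEq _ _ L3_eq_span.symm)

theorem L3.basis_apply (i : Fin 2) :
    (L3.basis i : FreeLieAlgebra (ZMod 2) (Fin 2)) = ![⁅⁅μ 0, μ 1⁆, μ 0⁆, ⁅⁅μ 0, μ 1⁆, μ 1⁆] i := by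
  rw [L3.basis, Module.Basis.map_apply, LinearEquiv.coe_ofEq_apply, Module.Basis.span_apply]

/-- `L³` of the free Lie algebra over `ℤ/2` on `μ₁, μ₂` is 2-dimensional with basis
`[[μ₁,μ₂],μ₁]`, `[[μ₁,μ₂],μ₂]`, whereas `γ₃/γ₄ ≅ ℤ/2` for `G = ℤ/2 * ℤ/2`; the canonical
epimorphism identifies `[[μ₁,μ₂],μ₁]` with `[[μ₁,μ₂],μ₂]` (their images
`(g₁,g₂,g₁)` and `(g₁,g₂,g₂)` agree modulo `γ₄`), so it is not injective. -/
theorem L3_free_lie_vs_Z2Z2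
    (h1 : ⁅⁅μ 0, μ 1⁆, μ 0⁆ ∈ L3) (h2 : ⁅⁅μ 0, μ 1⁆, μ 1⁆ ∈ L3) :
    (∃ b : Module.Basis (Fin 2) (ZMod 2) L3,
      b 0 = ⟨⁅⁅μ 0, μ 1⁆, μ 0⁆, h1⟩ ∧ b 1 = ⟨⁅⁅μ 0, μ 1⁆, μ 1⁆, h2⟩) ∧
    Nonempty (((Subgroup.lowerCentralSeries (⊤ : Subgroup Z2Z2) 2) ⧸
      ((Subgroup.lowerCentralSeries (⊤ : Subgroup Z2Z2) 3).subgroupOf (Subgroup.lowerCentralSeries (⊤ : Subgroup Z2Z2) 2))) ≃*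
        Multiplicative (ZMod 2)) ∧
    gcomm (gcomm (PresentedGroup.of 0 : Z2Z2) (PresentedGroup.of 1)) (PresentedGroup.of 0) *
      (gcomm (gcomm (PresentedGroup.of 0 : Z2Z2) (PresentedGroup.of 1))
        (PresentedGroup.of 1))⁻¹ ∈ Subgroup.lowerCentralSeries (⊤ : Subgroup Z2Z2) 3 := by
  refine ⟨⟨L3.basis, Subtype.ext (L3.basis_apply 0), Subtype.ext (L3.basis_apply 1)⟩,
    ⟨Z2Z2.lowerCentralSeriesQuotientEquiv 1⟩, ?_⟩
  rw [gcomm_gcomm_eq_of_mul_self_eq_one (Z2Z2.of_mul_self 0) (Z2Z2.of_mul_self 1), mul_inv_cancel]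
  exact one_mem _
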